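/- In the 4-state Büchi automaton over alphabet {a} with states p₀,p₁,p₂,p₃, accepting states {p₀,p₂}, initial state p₀, and transitions p₀→p₁, p₁→p₁, p₁→p₂, p₂→p₃, p₃→p₃ (all on a): the automaton does not accept a^ω, but the quotient automaton obtained by merging p₀ and p₁ into a single accepting state q (with transitions q→q, q→p₂, p₂→p₃, p₃→p₃) does accept a^ω. Hence identifying these two states changes the language. -/

import Mathlib

/-- States of the original automaton. -/
inductive S4 : Type | p0 | p1 | p2 | p3
deriving DecidableEq

/-- Transitions (all on the unique letter `a`): `p0→p1, p1→p1, p1→p2, p2→p3, p3→p3`. -/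
def trA : S4 → S4 → Prop
  | .p0, .p1 => True
  | .p1, .p1 => True
  | .p1, .p2 => True
  | .p2, .p3 => True
  | .p3, .p3 => True
  | _, _ => False

/-- Accepting states of the original automaton: `{p0, p2}`. -/
def accA : S4 → Prop := fun s => s = .p0 ∨ s = .p2

/-- States of the quotient automaton, where `q` is the merged class `{p0, p1}`. -/
inductive S3 : Type | q | p2 | p3
deriving DecidableEq

/-- Quotient transitions: `q→q, q→p2, p2→p3, p3→p3`. -/
def trB : S3 → S3 → Prop
  | .q, .q => True
  | .q, .p2 => True
  | .p2, .p3 => True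
  | .p3, .p3 => True
  | _, _ => False

/-- Accepting states of the quotient: `q` (containing the accepting `p0`) and `p2`. -/
def accB : S3 → Prop := fun s => s = .q ∨ s = .p2

/-!
No transition enters `p0`, and `p3` only leads back to `p3`. So after the first step the only
accepting state a run can visit is `p2`, and one step after visiting it the run is stuck in `p3`
for good. In the quotient, the class `q` inherits both the acceptance of `p0` and the self-loop
of `p1`, so the constant run at `q` is accepting.
-/

theorem forall_ge_of_trap {α : Type*} {r : α → α → Prop} {P : α → Prop}
    (hP : ∀ s t, P s → r s t → P t) {ρ : ℕ → α} (hρ : ∀ i, r (ρ i) (ρ (i + 1)))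
    {m : ℕ} (hm : P (ρ m)) : ∀ k, m ≤ k → P (ρ k) :=
  Nat.le_induction hm fun k _ ih => hP _ _ ih (hρ k)

theorem trA_ne_p0 {s t : S4} (h : trA s t) : t ≠ .p0 := by
  cases s <;> cases t <;> simp_all [trA]

theorem eq_p3_of_trA {s t : S4} (h : trA s t) (hs : s = .p2 ∨ s = .p3) : t = .p3 := by
  rcases hs with rfl | rfl <;> cases t <;> simp_all [trA]

/-- The original automaton (initial state `p0`) does not accept `a^ω`, but the quotient
automaton obtained by merging `p0` and `p1` (initial state `q`) does accept `a^ω`. -/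
theorem stmt10 :
    (¬ ∃ ρ : ℕ → S4, ρ 0 = .p0 ∧ (∀ i, trA (ρ i) (ρ (i + 1))) ∧
        ∀ n, ∃ m, n ≤ m ∧ accA (ρ m)) ∧
    (∃ ρ : ℕ → S3, ρ 0 = .q ∧ (∀ i, trB (ρ i) (ρ (i + 1))) ∧
        ∀ n, ∃ m, n ≤ m ∧ accB (ρ m)) := by
  refine ⟨?_, fun _ => .q, rfl, fun _ => trivial, fun n => ⟨n, le_rfl, .inl rfl⟩⟩
  rintro ⟨ρ, -, hstep, hacc⟩
  have hne_p0 : ∀ k, 1 ≤ k → ρ k ≠ .p0 :=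
    forall_ge_of_trap (fun _ _ _ h => trA_ne_p0 h) hstep (trA_ne_p0 (hstep 0))
  obtain ⟨m, hm, hacc_m⟩ := hacc 1
  have hp2 : ρ m = .p2 := hacc_m.resolve_left (hne_p0 m hm)
  have hp3 : ∀ k, m + 1 ≤ k → ρ k = .p3 :=
    forall_ge_of_trap (fun _ _ hs h => eq_p3_of_trA h (.inr hs)) hstep
      (eq_p3_of_trA (hstep m) (.inl hp2))
  obtain ⟨k, hk, hacc_k⟩ := hacc (m + 1)
  simp [accA, hp3 k hk] at hacc_k
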